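/- arXiv:1009.3166 — 2 statements merged into one kernel-verified Lean document; each statement's English description precedes it below -/
import Mathlib

section
/- Let h > 1, c ≠ 0, and d_h = (h−1)^{h/(h−1)}/h. Define u(x,t) = (d_h/|c|) [c² t − c x·ν]_+^{h/(h−1)} for a fixed unit vector ν ∈ ℝ^d. Then at every (x,t) with c² t − c x·ν > 0, u is C² and satisfies u_t = |Du|^{h−3} ⟨D²u Du, Du⟩; moreover u is C¹ on all of ℝ^d × ℝ with u_t and Du vanishing on the hyperplane {c² t = c x·ν}. -/
open Set

variable {d : ℕ}

-- The `h`-homogeneous infinity-Laplacian `Δ_∞^h f (x) = |Df|^{h-3} ⟨D²f Df, Df⟩`,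
-- with the convention that it is `0` where the gradient vanishes.
open Classical in
noncomputable def infLapH (h : ℝ) (f : EuclideanSpace ℝ (Fin d) → ℝ)
    (x : EuclideanSpace ℝ (Fin d)) : ℝ :=
  if gradient f x = 0 then 0
  else ‖gradient f x‖ ^ (h - 3) *
    (inner ℝ ((fderiv ℝ (gradient f) x) (gradient f x)) (gradient f x) : ℝ)

-- `u` satisfies `u_t = Δ_∞^h u` at the point `p = (x,t)`.
noncomputable def solvesAt (h : ℝ) (u : EuclideanSpace ℝ (Fin d) × ℝ → ℝ)
    (p : EuclideanSpace ℝ (Fin d) × ℝ) : Prop :=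
  deriv (fun τ => u (p.1, τ)) p.2 = infLapH h (fun x => u (x, p.2)) p.1

/-! The function is a traveling wave `u = Φ(s) / |c|` in the phase `s = c² t - c ⟪x, ν⟫`.
The profile `Φ` has derivative `G(s) = ((h - 1) s₊)^(1/(h-1))`, which is continuous and vanishes
at `s = 0`; this gives the `C¹` regularity and the vanishing derivatives on the free boundary.
In the region `s > 0`, `G` solves `G' = G^(2-h)`. For a ridge function `F ⟪x, w⟫` the
operator is `|F'|^(h-3) ‖w‖^(h+1) F'' F'²`, so with `w = -c ν` both `u_t` and `Δ_∞^h u`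
equal `|c| G(s)`. -/

open Real InnerProductSpace

theorem hasDerivAt_max_zero_rpow {α : ℝ} (hα : 1 < α) (z : ℝ) :
    HasDerivAt (fun z : ℝ => max z 0 ^ α) (α * max z 0 ^ (α - 1)) z := by
  have hα0 : α ≠ 0 := by positivity
  have hα1 : α - 1 ≠ 0 := by linarith
  rcases lt_trichotomy z 0 with hz | rfl | hz
  · rw [max_eq_right hz.le, zero_rpow hα1, mul_zero]
    apply (hasDerivAt_const z (0 : ℝ)).congr_of_eventuallyEq
    filter_upwards [eventually_lt_nhds hz] with y hy
    rw [max_eq_right hy.le, zero_rpow hα0]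
  · rw [max_self, zero_rpow hα1, mul_zero]
    have hright : HasDerivWithinAt (fun z : ℝ => max z 0 ^ α) 0 (Ici 0) 0 := by
      have h := (hasDerivAt_rpow_const (x := 0) (Or.inr hα.le)).hasDerivWithinAt (s := Ici 0)
      rw [zero_rpow hα1, mul_zero] at h
      exact h.congr (fun y hy => by rw [max_eq_left (mem_Ici.mp hy)]) (by rw [max_self])
    have hleft : HasDerivWithinAt (fun z : ℝ => max z 0 ^ α) 0 (Iic 0) 0 :=
      (hasDerivWithinAt_const (0 : ℝ) _ (0 : ℝ)).congr
        (fun y hy => by rw [max_eq_right (mem_Iic.mp hy), zero_rpow hα0])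
        (by rw [max_self, zero_rpow hα0])
    simpa only [Iic_union_Ici, hasDerivWithinAt_univ] using hleft.union hright
  · rw [max_eq_left hz.le]
    apply (hasDerivAt_rpow_const (Or.inl hz.ne')).congr_of_eventuallyEq
    filter_upwards [eventually_gt_nhds hz] with y hy
    rw [max_eq_left hy.le]

noncomputable def travelingProfile (h z : ℝ) : ℝ :=
  (h - 1) ^ (h / (h - 1)) / h * max z 0 ^ (h / (h - 1))

noncomputable def travelingProfileDeriv (h z : ℝ) : ℝ :=
  ((h - 1) * max z 0) ^ (h - 1)⁻¹

section Profile

variable {h : ℝ}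

theorem hasDerivAt_travelingProfile (hh : 1 < h) (z : ℝ) :
    HasDerivAt (travelingProfile h) (travelingProfileDeriv h z) z := by
  have hh1 : 0 < h - 1 := by linarith
  have hexp : h / (h - 1) - 1 = (h - 1)⁻¹ := by field_simp; ring
  have hα : 1 < h / (h - 1) := by rw [lt_div_iff₀ hh1]; linarith
  refine ((hasDerivAt_max_zero_rpow hα z).const_mul
    ((h - 1) ^ (h / (h - 1)) / h)).congr_deriv ?_
  have hconst : (h - 1) ^ (h / (h - 1)) / h * (h / (h - 1)) = (h - 1) ^ (h - 1)⁻¹ := by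
    rw [← hexp, rpow_sub_one hh1.ne']
    field_simp
  rw [travelingProfileDeriv, mul_rpow hh1.le (le_max_right z 0), ← hconst, hexp]
  ring

theorem travelingProfileDeriv_zero (hh : 1 < h) : travelingProfileDeriv h 0 = 0 := by
  rw [travelingProfileDeriv, max_self, mul_zero, zero_rpow (inv_ne_zero (by linarith))]

theorem travelingProfileDeriv_pos (hh : 1 < h) {z : ℝ} (hz : 0 < z) :
    0 < travelingProfileDeriv h z := by
  have hh1 : 0 < h - 1 := by linarith
  rw [travelingProfileDeriv, max_eq_left hz.le]
  positivity

theorem contDiff_travelingProfile (hh : 1 < h) : ContDiff ℝ 1 (travelingProfile h) := by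
  rw [contDiff_one_iff_deriv, funext fun z => (hasDerivAt_travelingProfile hh z).deriv]
  refine ⟨fun z => (hasDerivAt_travelingProfile hh z).differentiableAt, ?_⟩
  exact (continuous_rpow_const (inv_nonneg.mpr (by linarith))).comp
    (continuous_const.mul (continuous_id.max continuous_const))

theorem contDiffAt_travelingProfile {n : WithTop ℕ∞} {z : ℝ} (hz : 0 < z) :
    ContDiffAt ℝ n (travelingProfile h) z := by
  refine (contDiffAt_const (c := (h - 1) ^ (h / (h - 1)) / h).mul
    (contDiffAt_rpow_const_of_ne (p := h / (h - 1)) hz.ne')).congr_of_eventuallyEq ?_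
  filter_upwards [eventually_gt_nhds hz] with y hy
  rw [travelingProfile, max_eq_left hy.le]

theorem hasDerivAt_travelingProfileDeriv (hh : 1 < h) {z : ℝ} (hz : 0 < z) :
    HasDerivAt (travelingProfileDeriv h) (travelingProfileDeriv h z ^ (2 - h)) z := by
  have hh1 : 0 < h - 1 := by linarith
  have hlin : HasDerivAt (fun y => (h - 1) * y) (h - 1) z := by
    simpa using (hasDerivAt_id z).const_mul (h - 1)
  have hpow := (hasDerivAt_rpow_const (p := (h - 1)⁻¹) (Or.inl (by positivity))).comp z hlin
  refine (hpow.congr_of_eventuallyEq ?_).congr_deriv ?_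
  · filter_upwards [eventually_gt_nhds hz] with y hy
    rw [travelingProfileDeriv, max_eq_left hy.le]
    rfl
  · rw [travelingProfileDeriv, max_eq_left hz.le, ← rpow_mul (by positivity)]
    have hexp : (h - 1)⁻¹ * (2 - h) = (h - 1)⁻¹ - 1 := by field_simp; ring
    rw [hexp]
    field_simp

end Profile

theorem hasGradientAt_comp_inner {E : Type*} [NormedAddCommGroup E] [InnerProductSpace ℝ E]
    [CompleteSpace E] {F : ℝ → ℝ} {F' : ℝ} {w x : E} (hF : HasDerivAt F F' ⟪x, w⟫_ℝ) :
    HasGradientAt (fun y => F ⟪y, w⟫_ℝ) (F' • w) x := by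
  have hinner : HasFDerivAt (fun y : E => ⟪y, w⟫_ℝ) (innerSL ℝ w) x :=
    (innerSL ℝ w).hasFDerivAt.congr_of_eventuallyEq (.of_forall fun y => real_inner_comm w y)
  rw [hasGradientAt_iff_hasFDerivAt, map_smul]
  exact hF.comp_hasFDerivAt x hinner

theorem infLapH_comp_inner (h : ℝ) {F F' : ℝ → ℝ} {F'' : ℝ}
    {w x : EuclideanSpace ℝ (Fin d)} (hF : ∀ z, HasDerivAt F (F' z) z)
    (hF' : HasDerivAt F' F'' ⟪x, w⟫_ℝ)
    (hF'x : F' ⟪x, w⟫_ℝ ≠ 0) (hw : w ≠ 0) :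
    infLapH h (fun y => F ⟪y, w⟫_ℝ) x =
      ‖F' ⟪x, w⟫_ℝ • w‖ ^ (h - 3) * (F'' * F' ⟪x, w⟫_ℝ ^ 2 * ‖w‖ ^ 4) := by
  have hgrad : gradient (fun y => F ⟪y, w⟫_ℝ) = fun y => F' ⟪y, w⟫_ℝ • w :=
    gradient_eq fun y => hasGradientAt_comp_inner (hF _)
  have hHess := ((hasGradientAt_comp_inner hF').hasFDerivAt).smul_const w
  rw [infLapH, hgrad, if_neg (smul_ne_zero hF'x hw), hHess.fderiv]
  simp only [ContinuousLinearMap.smulRight_apply, toDual_apply_apply, real_inner_smul_left,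
    real_inner_smul_right, real_inner_self_eq_norm_sq]
  ring

noncomputable def travelingWave (h c : ℝ) (ν : EuclideanSpace ℝ (Fin d))
    (p : EuclideanSpace ℝ (Fin d) × ℝ) : ℝ :=
  travelingProfile h (c ^ 2 * p.2 - c * ⟪p.1, ν⟫_ℝ) / |c|

section TravelingWave

variable {h c : ℝ} {ν : EuclideanSpace ℝ (Fin d)}

theorem contDiff_travelingWave (hh : 1 < h) : ContDiff ℝ 1 (travelingWave h c ν) :=
  ((contDiff_travelingProfile hh).comp ((contDiff_const.mul contDiff_snd).sub
    (contDiff_const.mul (contDiff_fst.inner ℝ contDiff_const)))).div_const _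

theorem contDiffAt_travelingWave {n : WithTop ℕ∞} {p : EuclideanSpace ℝ (Fin d) × ℝ}
    (hp : 0 < c ^ 2 * p.2 - c * ⟪p.1, ν⟫_ℝ) : ContDiffAt ℝ n (travelingWave h c ν) p :=
  ((contDiffAt_travelingProfile hp).comp p ((contDiffAt_const.mul contDiffAt_snd).sub
    (contDiffAt_const.mul (contDiffAt_fst.inner ℝ contDiffAt_const)))).div_const _

theorem hasDerivAt_travelingWave_time (hh : 1 < h) (x : EuclideanSpace ℝ (Fin d)) (t : ℝ) :
    HasDerivAt (fun τ => travelingWave h c ν (x, τ))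
      (travelingProfileDeriv h (c ^ 2 * t - c * ⟪x, ν⟫_ℝ) * |c|) t := by
  have hphase : HasDerivAt (fun τ => c ^ 2 * τ - c * ⟪x, ν⟫_ℝ) (c ^ 2) t := by
    simpa using ((hasDerivAt_id t).const_mul (c ^ 2)).sub_const (c * ⟪x, ν⟫_ℝ)
  refine (((hasDerivAt_travelingProfile hh _).comp t hphase).div_const |c|).congr_deriv ?_
  rw [mul_div_assoc, ← sq_abs, sq, mul_self_div_self]

theorem travelingWave_slice (t : ℝ) :
    (fun x => travelingWave h c ν (x, t)) =
      fun x => travelingProfile h (c ^ 2 * t + ⟪x, -c • ν⟫_ℝ) / |c| := by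
  simp only [travelingWave, real_inner_smul_right, neg_mul, ← sub_eq_add_neg]

theorem hasGradientAt_travelingWave (hh : 1 < h) (x : EuclideanSpace ℝ (Fin d)) (t : ℝ) :
    HasGradientAt (fun x => travelingWave h c ν (x, t))
      ((travelingProfileDeriv h (c ^ 2 * t - c * ⟪x, ν⟫_ℝ) / |c|) • -c • ν) x := by
  rw [travelingWave_slice]
  refine hasGradientAt_comp_inner (F := fun z => travelingProfile h (c ^ 2 * t + z) / |c|) ?_
  have hF := ((hasDerivAt_travelingProfile hh _).comp_const_add
    (c ^ 2 * t) ⟪x, -c • ν⟫_ℝ).div_const |c|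
  simpa only [real_inner_smul_right, neg_mul, ← sub_eq_add_neg] using hF

theorem solvesAt_travelingWave (hh : 1 < h) (hc : c ≠ 0) (hν : ‖ν‖ = 1)
    {p : EuclideanSpace ℝ (Fin d) × ℝ} (hp : 0 < c ^ 2 * p.2 - c * ⟪p.1, ν⟫_ℝ) :
    solvesAt h (travelingWave h c ν) p := by
  obtain ⟨x, t⟩ := p
  have hshift : c ^ 2 * t + ⟪x, -c • ν⟫_ℝ = c ^ 2 * t - c * ⟪x, ν⟫_ℝ := by
    rw [real_inner_smul_right, neg_mul, ← sub_eq_add_neg]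
  set G := travelingProfileDeriv h (c ^ 2 * t - c * ⟪x, ν⟫_ℝ) with hGdef
  have hG : 0 < G := travelingProfileDeriv_pos hh hp
  have hcabs : 0 < |c| := abs_pos.mpr hc
  have hF' := ((hasDerivAt_travelingProfileDeriv hh (hshift ▸ hp)).comp_const_add
    (c ^ 2 * t) ⟪x, -c • ν⟫_ℝ).div_const |c|
  have hF z := ((hasDerivAt_travelingProfile hh _).comp_const_add (c ^ 2 * t) z).div_const |c|
  have hw : -c • ν ≠ 0 := smul_ne_zero (neg_ne_zero.mpr hc) (by rintro rfl; simp at hν)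
  rw [solvesAt, (hasDerivAt_travelingWave_time hh x t).deriv, travelingWave_slice,
    infLapH_comp_inner h hF hF' (by rw [hshift]; positivity) hw]
  simp only [hshift, ← hGdef, norm_smul, norm_neg, norm_div, Real.norm_eq_abs, abs_abs,
    abs_of_pos hG, hν]
  have hpow : G ^ (h - 3) * G ^ (2 - h) * G ^ 2 = G := by
    rw [← rpow_add hG, ← rpow_natCast, ← rpow_add hG]
    norm_num
  rw [mul_one, div_mul_cancel₀ _ hcabs.ne']
  calc G * |c| = G ^ (h - 3) * G ^ (2 - h) * G ^ 2 * |c| := by rw [hpow]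
    _ = _ := by field_simp

end TravelingWave

theorem stmt_12 (h c : ℝ) (hh : 1 < h) (hc : c ≠ 0)
    (ν : EuclideanSpace ℝ (Fin d)) (hν : ‖ν‖ = 1)
    (u : EuclideanSpace ℝ (Fin d) × ℝ → ℝ)
    (hu : ∀ p, u p = ((h-1) ^ (h/(h-1)) / h / |c|) *
      (max (c^2 * p.2 - c * (inner ℝ p.1 ν : ℝ)) 0) ^ (h/(h-1))) :
    ContDiff ℝ 1 u ∧
    (∀ p : EuclideanSpace ℝ (Fin d) × ℝ, 0 < c^2 * p.2 - c * (inner ℝ p.1 ν : ℝ) →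
      ContDiffAt ℝ 2 u p ∧ solvesAt h u p) ∧
    (∀ p : EuclideanSpace ℝ (Fin d) × ℝ, c^2 * p.2 = c * (inner ℝ p.1 ν : ℝ) →
      deriv (fun τ => u (p.1, τ)) p.2 = 0 ∧ gradient (fun x => u (x, p.2)) p.1 = 0) := by
  obtain rfl : u = travelingWave h c ν := funext fun p => by
    rw [hu, travelingWave, travelingProfile]
    ring
  refine ⟨contDiff_travelingWave hh, fun p hp => ⟨contDiffAt_travelingWave hp,
    solvesAt_travelingWave hh hc hν hp⟩, fun p hp => ?_⟩
  rw [← sub_eq_zero] at hp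
  rw [(hasDerivAt_travelingWave_time hh p.1 p.2).deriv,
    (hasGradientAt_travelingWave hh p.1 p.2).gradient, hp, travelingProfileDeriv_zero hh]
  simp
end

section
/- Let h > 1 and c_h = (1/2)^{1/(h−1)} ((h−1)/(h+1))^{h/(h−1)}. The function X(r) = c_h r^{(h+1)/(h−1)} satisfies |X'(r)|^{h−1} X''(r) = (1/(h−1)) X(r) for all r > 0. Consequently, for t < t₀, the function V(x,t) = c_h |x|^{(h+1)/(h−1)} (t₀ − t)^{−1/(h−1)} satisfies V_t = |DV|^{h−3} ⟨D²V DV, DV⟩ at every (x,t) with x ≠ 0 and t < t₀. -/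
open Set

variable {d : ℕ}

/-!
For a radial function `y ↦ φ ‖y‖` the gradient at `x` is `(φ'(r) / r) • x` with `r = ‖x‖`, and the
Hessian maps this gradient to `φ''(r)` times itself, so `Δ_∞^h (φ ∘ ‖·‖) = |φ'|^(h-1) φ''`.
Hence `X(‖y‖) T(t)` solves `u_t = Δ_∞^h u` as soon as `|X'|^(h-1) X'' = c X` and `T' = c T^h`.
For `X = c_h r^α` with `α = (h+1)/(h-1)` one has `(α-1)(h-1) = 2`, and `c_h` is exactly the
constant with `2 α (c_h α)^(h-1) = 1`, which turns the profile equation into `c = 1/(h-1)`; the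
blow-up factor `T = (t₀-t)^(-1/(h-1))` solves `T' = T^h / (h-1)`.
-/

open Filter Topology

section RadialCalculus

variable {E : Type*} [NormedAddCommGroup E] [InnerProductSpace ℝ E] {x : E}

theorem hasFDerivAt_norm_of_ne_zero (hx : x ≠ 0) :
    HasFDerivAt (‖·‖) (‖x‖⁻¹ • innerSL ℝ x) x := by
  have hsq := (hasStrictFDerivAt_norm_sq x).hasFDerivAt.sqrt (by positivity)
  simp only [Real.sqrt_sq (norm_nonneg _)] at hsq
  convert hsq using 1
  ext v
  simp only [smul_apply, coe_innerSL_apply, smul_eq_mul, one_div, mul_inv_rev, nsmul_eq_mul,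
    Nat.cast_ofNat]
  ring

theorem HasDerivAt.hasFDerivAt_comp_norm {φ : ℝ → ℝ} {φ' : ℝ} (hφ : HasDerivAt φ φ' ‖x‖)
    (hx : x ≠ 0) : HasFDerivAt (fun y => φ ‖y‖) ((φ' / ‖x‖) • innerSL ℝ x) x := by
  have h := hφ.comp_hasFDerivAt x (hasFDerivAt_norm_of_ne_zero hx)
  rwa [smul_smul, ← div_eq_mul_inv] at h

theorem HasDerivAt.hasGradientAt_comp_norm [CompleteSpace E] {φ : ℝ → ℝ} {φ' : ℝ}
    (hφ : HasDerivAt φ φ' ‖x‖) (hx : x ≠ 0) :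
    HasGradientAt (fun y => φ ‖y‖) ((φ' / ‖x‖) • x) x := by
  rw [hasGradientAt_iff_hasFDerivAt]
  refine (hφ.hasFDerivAt_comp_norm hx).congr_fderiv ?_
  ext v
  simp [InnerProductSpace.toDual_apply_apply]

theorem HasDerivAt.hasFDerivAt_smul_self_comp_norm {ψ : ℝ → ℝ} {ψ' : ℝ}
    (hψ : HasDerivAt ψ ψ' ‖x‖) (hx : x ≠ 0) :
    HasFDerivAt (fun y => ψ ‖y‖ • y)
      (ψ ‖x‖ • ContinuousLinearMap.id ℝ E + ((ψ' / ‖x‖) • innerSL ℝ x).smulRight x) x :=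
  (hψ.hasFDerivAt_comp_norm hx).smul (hasFDerivAt_id x)

variable [CompleteSpace E] {φ : ℝ → ℝ}

theorem gradient_comp_norm (hφ : DifferentiableAt ℝ φ ‖x‖) (hx : x ≠ 0) :
    gradient (fun y => φ ‖y‖) x = (deriv φ ‖x‖ / ‖x‖) • x :=
  (hφ.hasDerivAt.hasGradientAt_comp_norm hx).gradient

theorem inner_fderiv_gradient_comp_norm (hφ : ∀ᶠ s in 𝓝 ‖x‖, DifferentiableAt ℝ φ s)
    (hφ' : DifferentiableAt ℝ (deriv φ) ‖x‖) (hx : x ≠ 0) :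
    inner ℝ (fderiv ℝ (gradient fun y => φ ‖y‖) x (gradient (fun y => φ ‖y‖) x))
        (gradient (fun y => φ ‖y‖) x)
      = deriv φ ‖x‖ ^ 2 * deriv (deriv φ) ‖x‖ := by
  have hr : 0 < ‖x‖ := norm_pos_iff.mpr hx
  have hgrad : (gradient fun y => φ ‖y‖) =ᶠ[𝓝 x] fun y => (deriv φ ‖y‖ / ‖y‖) • y := by
    filter_upwards [continuous_norm.continuousAt.eventually hφ, eventually_ne_nhds hx]
      with y hy hy0 using gradient_comp_norm hy hy0
  have hψ : HasDerivAt (fun s => deriv φ s / s)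
      ((deriv (deriv φ) ‖x‖ * ‖x‖ - deriv φ ‖x‖ * 1) / ‖x‖ ^ 2) ‖x‖ :=
    hφ'.hasDerivAt.div (hasDerivAt_id _) hr.ne'
  rw [gradient_comp_norm hφ.self_of_nhds hx, hgrad.fderiv_eq,
    (hψ.hasFDerivAt_smul_self_comp_norm hx).fderiv]
  simp only [add_apply, smul_apply, ContinuousLinearMap.id_apply,
    ContinuousLinearMap.smulRight_apply, innerSL_apply_apply, smul_eq_mul, inner_add_left,
    real_inner_smul_left, real_inner_smul_right, real_inner_self_eq_norm_sq]
  field_simp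
  ring

end RadialCalculus

theorem infLapH_comp_norm (h : ℝ) {φ : ℝ → ℝ} {x : EuclideanSpace ℝ (Fin d)}
    (hφ : ∀ᶠ s in 𝓝 ‖x‖, DifferentiableAt ℝ φ s) (hφ' : DifferentiableAt ℝ (deriv φ) ‖x‖)
    (hx : x ≠ 0) (hφ0 : deriv φ ‖x‖ ≠ 0) :
    infLapH h (fun y => φ ‖y‖) x = |deriv φ ‖x‖| ^ (h - 1) * deriv (deriv φ) ‖x‖ := by
  have hr : 0 < ‖x‖ := norm_pos_iff.mpr hx
  have hgrad := gradient_comp_norm hφ.self_of_nhds hx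
  have hnorm : ‖gradient (fun y => φ ‖y‖) x‖ = |deriv φ ‖x‖| := by
    rw [hgrad, norm_smul, Real.norm_eq_abs, abs_div, abs_of_pos hr, div_mul_cancel₀ _ hr.ne']
  have hgrad0 : gradient (fun y => φ ‖y‖) x ≠ 0 := by
    rw [← norm_ne_zero_iff, hnorm]; exact abs_ne_zero.mpr hφ0
  rw [infLapH, if_neg hgrad0, inner_fderiv_gradient_comp_norm hφ hφ' hx, hnorm, ← sq_abs,
    ← Real.rpow_natCast, ← mul_assoc, ← Real.rpow_add (abs_pos.mpr hφ0)]
  congr 2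
  push_cast
  ring

theorem solvesAt_separated {h c : ℝ} {X T : ℝ → ℝ} {x : EuclideanSpace ℝ (Fin d)} {t : ℝ}
    (hX : ∀ᶠ s in 𝓝 ‖x‖, DifferentiableAt ℝ X s) (hX' : DifferentiableAt ℝ (deriv X) ‖x‖)
    (hx : x ≠ 0) (hX0 : deriv X ‖x‖ ≠ 0)
    (hXode : |deriv X ‖x‖| ^ (h - 1) * deriv (deriv X) ‖x‖ = c * X ‖x‖)
    (hT : HasDerivAt T (c * T t ^ h) t) (hT0 : 0 < T t) :
    solvesAt h (fun p => X ‖p.1‖ * T p.2) (x, t) := by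
  have hderiv : deriv (fun s => X s * T t) = fun s => deriv X s * T t :=
    deriv_mul_const_field' _
  have hlap := infLapH_comp_norm h (φ := fun s => X s * T t)
    (hX.mono fun s hs => hs.mul_const _) (by rw [hderiv]; exact hX'.mul_const _) hx
    (by rw [hderiv]; exact mul_ne_zero hX0 hT0.ne')
  rw [solvesAt, (hT.const_mul (X ‖x‖)).deriv, hlap, hderiv, deriv_mul_const_field, abs_mul,
    abs_of_pos hT0, Real.mul_rpow (abs_nonneg _) hT0.le]
  have hTh : T t ^ h = T t ^ (h - 1) * T t := by
    rw [Real.rpow_sub_one hT0.ne', div_mul_cancel₀ _ hT0.ne']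
  rw [hTh]
  linear_combination (-(T t ^ (h - 1) * T t)) * hXode

theorem deriv_const_mul_rpow (c p : ℝ) :
    deriv (fun r : ℝ => c * r ^ p) = fun r => c * p * r ^ (p - 1) := by
  rw [deriv_const_mul_field']
  simp only [Real.deriv_rpow_const, mul_assoc]

theorem hasDerivAt_sub_rpow_neg_inv {h t₀ t : ℝ} (hh : h ≠ 1) (ht : t < t₀) :
    HasDerivAt (fun τ => (t₀ - τ) ^ (-(1 / (h - 1))))
      (1 / (h - 1) * ((t₀ - t) ^ (-(1 / (h - 1)))) ^ h) t := by
  have hs : 0 < t₀ - t := sub_pos.mpr ht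
  have hh1 : h - 1 ≠ 0 := sub_ne_zero.mpr hh
  convert ((hasDerivAt_id' t).const_sub t₀).rpow_const (p := -(1 / (h - 1))) (Or.inl hs.ne')
    using 1
  rw [← Real.rpow_mul hs.le]
  have hexp : -(1 / (h - 1)) * h = -(1 / (h - 1)) - 1 := by field_simp; ring
  rw [hexp]
  ring

namespace BlowUp

noncomputable def exponent (h : ℝ) : ℝ := (h + 1) / (h - 1)

noncomputable def const (h : ℝ) : ℝ :=
  (1 / 2 : ℝ) ^ (1 / (h - 1)) * ((h - 1) / (h + 1)) ^ (h / (h - 1))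

variable {h : ℝ}

theorem exponent_pos (hh : 1 < h) : 0 < exponent h :=
  div_pos (by linarith) (by linarith)

theorem exponent_sub_one (hh : 1 < h) : exponent h - 1 = 2 / (h - 1) := by
  have : h - 1 ≠ 0 := by linarith
  rw [exponent]; field_simp; ring

theorem const_pos (hh : 1 < h) : 0 < const h := by
  have : 0 < (h - 1) / (h + 1) := div_pos (by linarith) (by linarith)
  unfold const; positivity

theorem two_mul_exponent_mul_rpow (hh : 1 < h) :
    2 * exponent h * (const h * exponent h) ^ (h - 1) = 1 := by
  have hα := exponent_pos hh
  have hh1 : h - 1 ≠ 0 := by linarith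
  have hinv : (h - 1) / (h + 1) = (exponent h)⁻¹ := by rw [exponent, inv_div]
  rw [Real.mul_rpow (const_pos hh).le hα.le, const, hinv,
    Real.mul_rpow (by positivity) (by positivity), ← Real.rpow_mul (by norm_num),
    ← Real.rpow_mul (by positivity), one_div_mul_cancel hh1, div_mul_cancel₀ _ hh1,
    Real.rpow_one, Real.inv_rpow hα.le, Real.rpow_sub_one hα.ne']
  field_simp

noncomputable def profile (h : ℝ) (r : ℝ) : ℝ := const h * r ^ exponent h

theorem deriv_profile :
    deriv (profile h) = fun r => const h * exponent h * r ^ (exponent h - 1) :=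
  deriv_const_mul_rpow _ _

theorem deriv_deriv_profile :
    deriv (deriv (profile h)) =
      fun r => const h * exponent h * (exponent h - 1) * r ^ (exponent h - 1 - 1) := by
  rw [deriv_profile, deriv_const_mul_rpow]

theorem differentiableAt_profile {r : ℝ} (hr : r ≠ 0) : DifferentiableAt ℝ (profile h) r :=
  (Real.differentiableAt_rpow_const_of_ne _ hr).const_mul _

theorem differentiableAt_deriv_profile {r : ℝ} (hr : r ≠ 0) :
    DifferentiableAt ℝ (deriv (profile h)) r := by
  rw [deriv_profile]
  exact (Real.differentiableAt_rpow_const_of_ne _ hr).const_mul _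

theorem deriv_profile_pos (hh : 1 < h) {r : ℝ} (hr : 0 < r) : 0 < deriv (profile h) r := by
  have := const_pos hh
  have := exponent_pos hh
  rw [deriv_profile]
  positivity

theorem profile_ode (hh : 1 < h) {r : ℝ} (hr : 0 < r) :
    |deriv (profile h) r| ^ (h - 1) * deriv (deriv (profile h)) r =
      1 / (h - 1) * profile h r := by
  have hh1 : h - 1 ≠ 0 := by linarith
  have hr2 : r ^ (2 : ℝ) * r ^ (exponent h - 1 - 1) = r ^ exponent h := by
    rw [← Real.rpow_add hr]; ring_nf
  rw [abs_of_pos (deriv_profile_pos hh hr), deriv_deriv_profile, deriv_profile, profile,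
    Real.mul_rpow (mul_pos (const_pos hh) (exponent_pos hh)).le (by positivity),
    ← Real.rpow_mul hr.le, exponent_sub_one hh, div_mul_cancel₀ _ hh1]
  calc _ = 2 * exponent h * (const h * exponent h) ^ (h - 1) * (const h / (h - 1))
        * (r ^ (2 : ℝ) * r ^ (exponent h - 1 - 1)) := by
        rw [exponent_sub_one hh]; field_simp
    _ = _ := by rw [two_mul_exponent_mul_rpow hh, hr2]; ring

end BlowUp

theorem stmt_19 (h t₀ : ℝ) (hh : 1 < h)
    (ch : ℝ) (hch : ch = (1/2 : ℝ) ^ (1/(h-1)) * ((h-1)/(h+1)) ^ (h/(h-1)))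
    (X : ℝ → ℝ) (hX : ∀ r, X r = ch * r ^ ((h+1)/(h-1))) :
    (∀ r > (0:ℝ), |deriv X r| ^ (h-1) * deriv (deriv X) r = (1/(h-1)) * X r) ∧
    (∀ (x : EuclideanSpace ℝ (Fin d)) (t : ℝ), x ≠ 0 → t < t₀ →
      solvesAt h
        (fun p : EuclideanSpace ℝ (Fin d) × ℝ =>
          ch * ‖p.1‖ ^ ((h+1)/(h-1)) * (t₀ - p.2) ^ (-(1/(h-1)))) (x, t)) := by
  subst hch
  obtain rfl : X = BlowUp.profile h := funext hX
  refine ⟨fun r hr => BlowUp.profile_ode hh hr, fun x t hx ht => ?_⟩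
  have hr : 0 < ‖x‖ := norm_pos_iff.mpr hx
  exact solvesAt_separated
    (eventually_ne_nhds hr.ne' |>.mono fun s hs => BlowUp.differentiableAt_profile hs)
    (BlowUp.differentiableAt_deriv_profile hr.ne') hx (BlowUp.deriv_profile_pos hh hr).ne'
    (BlowUp.profile_ode hh hr) (hasDerivAt_sub_rpow_neg_inv hh.ne' ht)
    (Real.rpow_pos_of_pos (sub_pos.mpr ht) _)
end
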